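/- Define, for pairs of indices, M(p₁,q₁; p₂,q₂) = ρ_{p₁q₂} ρ_{q₁p₂} + ρ_{p₁p₂} ρ_{q₁q₂}, and P₁(p₁,q₁,…,p₄,q₄) = M(p₁,q₁; p₂,q₂) · M(p₃,q₃; p₄,q₄). Then there exists a universal constant C > 0 such that for every m and every m×m correlation matrix R: | Σ over all tuples with 1 ≤ p_d < q_d ≤ m (d = 1, …, 4) of P₁² − m⁴/4 | ≤ C · m³ · Σ_{k=0}^{8} ‖R − I_m‖_F^{k}. -/

import Mathlib

open Finset

noncomputable section

/-- `R` is an `m × m` (Pearson) correlation matrix: symmetric positive semidefinite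
with unit diagonal. -/
def IsCorrMatrix {m : ℕ} (R : Matrix (Fin m) (Fin m) ℝ) : Prop :=
  R.PosSemidef ∧ ∀ p, R p p = 1

/-- The Frobenius norm `‖R - I_m‖_F`. -/
def frobDistId {m : ℕ} (R : Matrix (Fin m) (Fin m) ℝ) : ℝ :=
  Real.sqrt (∑ p, ∑ q, (R p q - if p = q then (1 : ℝ) else 0) ^ 2)

/-- `M(p₁,q₁; p₂,q₂) = ρ_{p₁q₂} ρ_{q₁p₂} + ρ_{p₁p₂} ρ_{q₁q₂}`, where a pair of
indices is encoded as an element of `Fin m × Fin m`. -/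
def Mmom {m : ℕ} (R : Matrix (Fin m) (Fin m) ℝ) (x y : Fin m × Fin m) : ℝ :=
  R x.1 y.2 * R x.2 y.1 + R x.1 y.1 * R x.2 y.2

/-- `P₁(p₁,q₁,…,p₄,q₄) = M(p₁,q₁; p₂,q₂) ⬝ M(p₃,q₃; p₄,q₄)`, where the tuple of
four index pairs is encoded as `v : Fin 4 → Fin m × Fin m`. -/
def P1 {m : ℕ} (R : Matrix (Fin m) (Fin m) ℝ) (v : Fin 4 → Fin m × Fin m) : ℝ :=
  Mmom R (v 0) (v 1) * Mmom R (v 2) (v 3)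

/-!
Write `t = ‖R - I‖_F²` and `A = Σ_{p<q, p'<q'} M(p,q; p',q')²`; the sum of `P₁²` factors as `A²`,
so it suffices to show `A = m(m-1)/2 + O(m (t + t²))`. A diagonal term is
`M(x,x) = 1 + ρ_{pq}²`, contributing `1 + O(ρ_{pq}²)`. Off the diagonal,
`M² ≤ 2 Mmom (R ⊙ R)` and the identity part `Mmom 1` vanishes there; since `1 ≤ R ⊙ R`
entrywise, `Mmom (R ⊙ R) - Mmom 1 ≥ 0` everywhere, and summed over all pairs it equals
`2((m + t)² - m²)` because the entries of `R ⊙ R` add up to `m + t`.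
-/

open Matrix

section

variable {m : ℕ}

def strictPairs (m : ℕ) : Finset (Fin m × Fin m) := {x | x.1 < x.2}

@[simp]
theorem mem_strictPairs {x : Fin m × Fin m} : x ∈ strictPairs m ↔ x.1 < x.2 := by
  simp [strictPairs]

theorem card_strictPairs : #(strictPairs m) = m.choose 2 := by
  rw [strictPairs, Fintype.card_product_filter_lt, Fintype.card_fin]

theorem sum_filter_fin_four_mul {α β : Type*} [Fintype α] [CommSemiring β] (q : α → Prop)
    [DecidablePred q] (f : α → α → β) :
    ∑ v ∈ (univ : Finset (Fin 4 → α)).filter (fun v => ∀ d, q (v d)),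
        f (v 0) (v 1) * f (v 2) (v 3)
      = (∑ x ∈ univ.filter q, ∑ y ∈ univ.filter q, f x y) ^ 2 := by
  set s := univ.filter q
  rw [← sum_product' (f := f), sq, sum_mul_sum, ← sum_product']
  refine sum_nbij' (fun v => ((v 0, v 1), (v 2, v 3))) (fun z => ![z.1.1, z.1.2, z.2.1, z.2.2])
    ?_ ?_ ?_ ?_ ?_
  · intro v hv
    simp only [mem_filter, mem_univ, true_and] at hv
    simp [s, hv]
  · intro z hz
    simp only [mem_product, mem_filter, mem_univ, true_and, s] at hz
    simp only [mem_filter, mem_univ, true_and]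
    intro d
    fin_cases d
    exacts [hz.1.1, hz.1.2, hz.2.1, hz.2.2]
  · intro v _
    funext d
    fin_cases d <;> rfl
  · intro z _
    rfl
  · intro v _
    rfl

theorem Mmom_sq_le (R : Matrix (Fin m) (Fin m) ℝ) (x y : Fin m × Fin m) :
    Mmom R x y ^ 2 ≤ 2 * Mmom (R ⊙ R) x y := by
  simp only [Mmom, hadamard_apply]
  nlinarith [sq_nonneg (R x.1 y.2 * R x.2 y.1 - R x.1 y.1 * R x.2 y.2)]

theorem Mmom_one_eq_zero {x y : Fin m × Fin m} (hx : x.1 < x.2) (hy : y.1 < y.2) (hxy : x ≠ y) :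
    Mmom 1 x y = 0 := by
  obtain ⟨p, q⟩ := x
  obtain ⟨p', q'⟩ := y
  simp only [Mmom, one_apply]
  split_ifs <;> simp_all [lt_asymm]

theorem Mmom_mono {S T : Matrix (Fin m) (Fin m) ℝ} (hS : ∀ a b, 0 ≤ S a b)
    (hST : ∀ a b, S a b ≤ T a b) (x y : Fin m × Fin m) : Mmom S x y ≤ Mmom T x y := by
  have hT a b : 0 ≤ T a b := (hS a b).trans (hST a b)
  exact add_le_add (mul_le_mul (hST _ _) (hST _ _) (hS _ _) (hT _ _))
    (mul_le_mul (hST _ _) (hST _ _) (hS _ _) (hT _ _))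

theorem sum_Mmom (S : Matrix (Fin m) (Fin m) ℝ) :
    ∑ x, ∑ y, Mmom S x y = 2 * (∑ a, ∑ b, S a b) ^ 2 := by
  simp only [Mmom, Fintype.sum_prod_type, sum_add_distrib, sq, sum_mul_sum]
  rw [two_mul]
  congr 1
  exact sum_congr rfl fun _ _ => sum_congr rfl fun _ _ => sum_comm

def sumMmomSq (R : Matrix (Fin m) (Fin m) ℝ) : ℝ :=
  ∑ x ∈ strictPairs m, ∑ y ∈ strictPairs m, Mmom R x y ^ 2

theorem sum_P1_sq_eq_sumMmomSq_sq (R : Matrix (Fin m) (Fin m) ℝ) :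
    ∑ v ∈ (univ : Finset (Fin 4 → Fin m × Fin m)).filter (fun v => ∀ d, (v d).1 < (v d).2),
        P1 R v ^ 2 = sumMmomSq R ^ 2 := by
  simp only [P1, mul_pow]
  exact sum_filter_fin_four_mul (fun x : Fin m × Fin m => x.1 < x.2) (fun x y => Mmom R x y ^ 2)

section UnitDiagonal

theorem sum_sum_one_apply {n : Type*} [Fintype n] [DecidableEq n] :
    ∑ a, ∑ b, (1 : Matrix n n ℝ) a b = Fintype.card n := by
  simp [one_apply]

variable {n : Type*} [DecidableEq n] {R : Matrix n n ℝ}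

theorem hadamard_self_sub_one_apply (hdiag : ∀ p, R p p = 1) (a b : n) :
    (R ⊙ R - 1) a b = (R a b - if a = b then 1 else 0) ^ 2 := by
  rw [Matrix.sub_apply, hadamard_apply, one_apply]
  split_ifs with h
  · subst h
    simp [hdiag]
  · ring

theorem hadamard_self_sub_one_nonneg (hdiag : ∀ p, R p p = 1) (a b : n) :
    0 ≤ (R ⊙ R - 1) a b := by
  rw [hadamard_self_sub_one_apply hdiag]
  positivity

theorem one_apply_le_hadamard_self (hdiag : ∀ p, R p p = 1) (a b : n) :
    (1 : Matrix n n ℝ) a b ≤ (R ⊙ R) a b :=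
  sub_nonneg.1 (hadamard_self_sub_one_nonneg hdiag a b)

end UnitDiagonal

section UnitDiagonalFin

variable {R : Matrix (Fin m) (Fin m) ℝ}

theorem sum_hadamard_self_sub_one (hdiag : ∀ p, R p p = 1) :
    ∑ a, ∑ b, (R ⊙ R - 1) a b = frobDistId R ^ 2 := by
  rw [frobDistId, Real.sq_sqrt (by positivity)]
  simp only [hadamard_self_sub_one_apply hdiag]

theorem sum_hadamard_self (hdiag : ∀ p, R p p = 1) :
    ∑ a, ∑ b, (R ⊙ R) a b = m + frobDistId R ^ 2 := by
  rw [← sum_hadamard_self_sub_one hdiag]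
  simp only [Matrix.sub_apply, sum_sub_distrib, sum_sum_one_apply, Fintype.card_fin]
  ring

theorem Mmom_self_of_lt (hsymm : R.IsHermitian) (hdiag : ∀ p, R p p = 1)
    {x : Fin m × Fin m} (hx : x.1 < x.2) : Mmom R x x = 1 + (R ⊙ R - 1) x.1 x.2 := by
  have hsymm' : R x.2 x.1 = R x.1 x.2 := by simpa using hsymm.apply x.1 x.2
  simp [Mmom, hadamard_apply, one_apply, hx.ne, hdiag, hsymm']
  ring

theorem sum_Mmom_self_sq_le (hsymm : R.IsHermitian) (hdiag : ∀ p, R p p = 1) :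
    ∑ x ∈ strictPairs m, Mmom R x x ^ 2
      ≤ #(strictPairs m) + 2 * frobDistId R ^ 2 + (frobDistId R ^ 2) ^ 2 := by
  set D : Fin m × Fin m → ℝ := fun x => (R ⊙ R - 1) x.1 x.2
  have hD x : 0 ≤ D x := hadamard_self_sub_one_nonneg hdiag x.1 x.2
  have hsum : ∑ x ∈ strictPairs m, D x ≤ frobDistId R ^ 2 := by
    calc ∑ x ∈ strictPairs m, D x ≤ ∑ x, D x := sum_le_univ_sum_of_nonneg hD
      _ = frobDistId R ^ 2 := by rw [Fintype.sum_prod_type, sum_hadamard_self_sub_one hdiag]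
  calc ∑ x ∈ strictPairs m, Mmom R x x ^ 2
      = ∑ x ∈ strictPairs m, (1 + 2 * D x + D x ^ 2) := by
        refine sum_congr rfl fun x hx => ?_
        rw [Mmom_self_of_lt hsymm hdiag (mem_strictPairs.1 hx)]
        ring
    _ = #(strictPairs m) + 2 * ∑ x ∈ strictPairs m, D x
          + ∑ x ∈ strictPairs m, D x ^ 2 := by
        rw [sum_add_distrib, sum_add_distrib, ← mul_sum, sum_const, nsmul_one]
    _ ≤ #(strictPairs m) + 2 * ∑ x ∈ strictPairs m, D x
          + (∑ x ∈ strictPairs m, D x) ^ 2 := by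
        gcongr
        exact sum_sq_le_sq_sum_of_nonneg fun x _ => hD x
    _ ≤ _ := by
        have := sum_nonneg fun x (_ : x ∈ strictPairs m) => hD x
        gcongr

theorem sum_Mmom_sq_offDiag_le (hdiag : ∀ p, R p p = 1) :
    ∑ x ∈ strictPairs m, ∑ y ∈ (strictPairs m).erase x, Mmom R x y ^ 2
      ≤ 4 * ((m + frobDistId R ^ 2) ^ 2 - m ^ 2) := by
  have hG x y : 0 ≤ 2 * (Mmom (R ⊙ R) x y - Mmom 1 x y) := by
    have hone a b : (0 : ℝ) ≤ (1 : Matrix (Fin m) (Fin m) ℝ) a b := by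
      rw [one_apply]
      split_ifs <;> norm_num
    linarith [Mmom_mono hone (one_apply_le_hadamard_self hdiag) x y]
  calc ∑ x ∈ strictPairs m, ∑ y ∈ (strictPairs m).erase x, Mmom R x y ^ 2
      ≤ ∑ x ∈ strictPairs m, ∑ y ∈ (strictPairs m).erase x,
          2 * (Mmom (R ⊙ R) x y - Mmom 1 x y) := by
        gcongr with x hx y hy
        obtain ⟨hyx, hy⟩ := mem_erase.1 hy
        rw [Mmom_one_eq_zero (mem_strictPairs.1 hx) (mem_strictPairs.1 hy) hyx.symm, sub_zero]
        exact Mmom_sq_le R x y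
    _ ≤ ∑ x, ∑ y, 2 * (Mmom (R ⊙ R) x y - Mmom 1 x y) := by
        exact (sum_le_sum fun x _ => sum_le_univ_sum_of_nonneg (hG x)).trans
          (sum_le_univ_sum_of_nonneg fun x => sum_nonneg fun y _ => hG x y)
    _ = 4 * ((m + frobDistId R ^ 2) ^ 2 - m ^ 2) := by
        simp only [← mul_sum, sum_sub_distrib, sum_Mmom, sum_hadamard_self hdiag,
          sum_sum_one_apply, Fintype.card_fin]
        ring

theorem card_strictPairs_le_sumMmomSq (hsymm : R.IsHermitian) (hdiag : ∀ p, R p p = 1) :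
    (#(strictPairs m) : ℝ) ≤ sumMmomSq R := by
  rw [card_eq_sum_ones, Nat.cast_sum, Nat.cast_one]
  refine sum_le_sum fun x hx => ?_
  have hself : 1 ≤ Mmom R x x ^ 2 := by
    rw [Mmom_self_of_lt hsymm hdiag (mem_strictPairs.1 hx)]
    nlinarith [hadamard_self_sub_one_nonneg hdiag x.1 x.2]
  exact hself.trans (single_le_sum (fun y _ => sq_nonneg (Mmom R x y)) hx)

theorem sumMmomSq_le (hsymm : R.IsHermitian) (hdiag : ∀ p, R p p = 1) :
    sumMmomSq R ≤ #(strictPairs m) + 2 * frobDistId R ^ 2 + (frobDistId R ^ 2) ^ 2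
      + 4 * ((m + frobDistId R ^ 2) ^ 2 - m ^ 2) := by
  have hsplit : sumMmomSq R = ∑ x ∈ strictPairs m, Mmom R x x ^ 2
      + ∑ x ∈ strictPairs m, ∑ y ∈ (strictPairs m).erase x, Mmom R x y ^ 2 := by
    rw [sumMmomSq, ← sum_add_distrib]
    exact sum_congr rfl fun x hx => (add_sum_erase _ _ hx).symm
  rw [hsplit]
  exact add_le_add (sum_Mmom_self_sq_le hsymm hdiag) (sum_Mmom_sq_offDiag_le hdiag)

end UnitDiagonalFin

theorem abs_sq_sub_le {m A t : ℝ} (hm : 1 ≤ m) (ht : 0 ≤ t) (hlow : m * (m - 1) / 2 ≤ A)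
    (hup : A ≤ m * (m - 1) / 2 + 10 * m * (t + t ^ 2)) :
    |A ^ 2 - m ^ 4 / 4| ≤ 100 * m ^ 3 * (1 + t + t ^ 2) ^ 2 := by
  have hmt : 0 ≤ m * (t + t ^ 2) := by positivity
  have hsub : |A - m ^ 2 / 2| ≤ 10 * m * (1 + t + t ^ 2) := by
    rw [abs_le]
    constructor <;> nlinarith
  have hadd : |A + m ^ 2 / 2| ≤ 10 * m ^ 2 * (1 + t + t ^ 2) := by
    rw [abs_of_nonneg (by nlinarith)]
    nlinarith
  calc |A ^ 2 - m ^ 4 / 4| = |A - m ^ 2 / 2| * |A + m ^ 2 / 2| := by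
        rw [← abs_mul]
        ring_nf
    _ ≤ 10 * m * (1 + t + t ^ 2) * (10 * m ^ 2 * (1 + t + t ^ 2)) :=
        mul_le_mul hsub hadd (abs_nonneg _) (by positivity)
    _ = 100 * m ^ 3 * (1 + t + t ^ 2) ^ 2 := by ring

theorem sq_one_add_sq_add_pow_four_le {δ : ℝ} (hδ : 0 ≤ δ) :
    (1 + δ ^ 2 + (δ ^ 2) ^ 2) ^ 2 ≤ 3 * ∑ k ∈ range 9, δ ^ k := by
  simp only [sum_range_succ, sum_range_zero]
  nlinarith [pow_nonneg hδ 1, pow_nonneg hδ 2, pow_nonneg hδ 3, pow_nonneg hδ 4,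
    pow_nonneg hδ 5, pow_nonneg hδ 6, pow_nonneg hδ 7, pow_nonneg hδ 8]

end

/-- There is a universal constant `C > 0` such that for every `m` and correlation
matrix `R`, the sum of `P₁²` over all tuples with `p_d < q_d` (`d = 1, …, 4`)
differs from `m⁴/4` by at most `C m³ Σ_{k=0}^{8} ‖R − I_m‖_F^k`. -/
theorem sum_P1_sq_estimate :
    ∃ C : ℝ, 0 < C ∧ ∀ (m : ℕ) (R : Matrix (Fin m) (Fin m) ℝ), IsCorrMatrix R →
      |(∑ v ∈ (Finset.univ : Finset (Fin 4 → Fin m × Fin m)).filter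
            (fun v => ∀ d, (v d).1 < (v d).2), P1 R v ^ 2)
          - (m : ℝ) ^ 4 / 4|
        ≤ C * (m : ℝ) ^ 3 * ∑ k ∈ Finset.range 9, frobDistId R ^ k := by
  refine ⟨300, by norm_num, fun m R ⟨hpsd, hdiag⟩ => ?_⟩
  rcases Nat.eq_zero_or_pos m with rfl | hm
  · simp [univ_eq_empty]
  have hcard : (#(strictPairs m) : ℝ) = m * (m - 1) / 2 := by
    rw [card_strictPairs, Nat.cast_choose_two]
  have hm' : (1 : ℝ) ≤ m := Nat.one_le_cast.2 hm
  set δ := frobDistId R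
  have hδ : 0 ≤ δ := Real.sqrt_nonneg _
  have hlow := card_strictPairs_le_sumMmomSq hpsd.1 hdiag
  have hup := sumMmomSq_le hpsd.1 hdiag
  rw [hcard] at hlow hup
  rw [sum_P1_sq_eq_sumMmomSq_sq]
  calc _ ≤ 100 * m ^ 3 * (1 + δ ^ 2 + (δ ^ 2) ^ 2) ^ 2 :=
        abs_sq_sub_le hm' (sq_nonneg δ) hlow (by nlinarith [sq_nonneg δ, pow_nonneg hδ 4])
    _ ≤ 300 * m ^ 3 * ∑ k ∈ range 9, δ ^ k := by
        nlinarith [sq_one_add_sq_add_pow_four_le hδ, pow_nonneg (Nat.cast_nonneg (α := ℝ) m) 3]
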